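/- arXiv:2304.14262 — 2 statements merged into one kernel-verified Lean document; each statement's English description precedes it below -/
import Mathlib

section
/- Let p* be the componentwise minimum competitive price vector, i.e. p* is competitive and p*(i) ≤ q(i) for every object i and every competitive price vector q. Then there exists a feasible allocation x* such that: (1) x*(·,j) ∈ D_j(p*) for every buyer j; (2) every object with positive price is completely sold, i.e. ∑_{j∈N} x* i j = b i for every i with p*(i) > 0; and (3) as much as possible is sold, i.e. ∑_{i∈Ω} ∑_{j∈N} x* i j = min(∑_{i∈Ω} b i, ∑_{j∈N} d j). -/
open Finset

section MarketDefs

variable {Ω N : Type*}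

/-- A bundle for a buyer with demand `dj`: at most `b i` copies of each object,
at most `dj` items in total. -/
def IsBundle [Fintype Ω] (b : Ω → ℕ) (dj : ℕ) (y : Ω → ℕ) : Prop :=
  (∀ i, y i ≤ b i) ∧ ∑ i, y i ≤ dj

/-- Utility of bundle `y` at prices `p` for a buyer with per-unit valuations `v`. -/
noncomputable def utility [Fintype Ω] (v : Ω → ℕ) (p : Ω → ℝ) (y : Ω → ℕ) : ℝ :=
  ∑ i, ((v i : ℝ) - p i) * (y i : ℝ)

/-- `y` is a preferred bundle (member of the demand set `D_j(p)`). -/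
def InDemand [Fintype Ω] (b : Ω → ℕ) (dj : ℕ) (v : Ω → ℕ) (p : Ω → ℝ) (y : Ω → ℕ) : Prop :=
  IsBundle b dj y ∧ ∀ z, IsBundle b dj z → utility v p z ≤ utility v p y

/-- Feasible allocation. -/
def Feasible [Fintype Ω] [Fintype N] (b : Ω → ℕ) (d : N → ℕ) (x : Ω → N → ℕ) : Prop :=
  (∀ i, ∑ j, x i j ≤ b i) ∧ ∀ j, ∑ i, x i j ≤ d j

/-- Stable allocation at prices `p`: feasible, and every buyer gets a preferred bundle. -/
def Stable [Fintype Ω] [Fintype N] (b : Ω → ℕ) (d : N → ℕ) (v : Ω → N → ℕ)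
    (p : Ω → ℝ) (x : Ω → N → ℕ) : Prop :=
  Feasible b d x ∧ ∀ j, InDemand b (d j) (fun i => v i j) p (fun i => x i j)

/-- Competitive price vector: nonnegative, and some allocation is stable for it. -/
def Competitive [Fintype Ω] [Fintype N] (b : Ω → ℕ) (d : N → ℕ) (v : Ω → N → ℕ)
    (p : Ω → ℝ) : Prop :=
  (∀ i, 0 ≤ p i) ∧ ∃ x, Stable b d v p x

/-- Walrasian price vector: some stable allocation sells as much as possible. -/
def Walrasian [Fintype Ω] [Fintype N] (b : Ω → ℕ) (d : N → ℕ) (v : Ω → N → ℕ)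
    (p : Ω → ℝ) : Prop :=
  (∀ i, 0 ≤ p i) ∧ ∃ x, Stable b d v p x ∧
    ∑ i, ∑ j, x i j = min (∑ i, b i) (∑ j, d j)

/-- Componentwise minimum Walrasian price vector. -/
def MinWalrasian [Fintype Ω] [Fintype N] (b : Ω → ℕ) (d : N → ℕ) (v : Ω → N → ℕ)
    (p : Ω → ℝ) : Prop :=
  Walrasian b d v p ∧ ∀ q, Walrasian b d v q → ∀ i, p i ≤ q i

end MarketDefs

/-! Take a stable allocation `x` at `p*` selling as many units of positively priced objects as
possible, and suppose a positively priced object `i₀` is not sold out. Let `A` be the set of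
objects from which a unit can be passed on to `i₀` along a chain of buyers, each indifferent
between the object it gives up and the one it takes. Shifting units along such a chain keeps the
allocation stable, so by the choice of `x` every object of `A` has a positive price, and no
demanded bundle contains more units of `A` than the bundle a buyer already holds. Hence `x`
stays stable when all prices on `A` drop by a small `ε`, contradicting the minimality of `p*`.

Among the stable allocations that sell out every positively priced object, one selling the most
units sells `min (∑ b) (∑ d)`: otherwise an unsold object, necessarily free, could be added to
the bundle of a buyer with unused demand. -/

open Finset Filter Topology

lemma exists_add_single_eq {α : Type*} [DecidableEq α] {y : α → ℕ} {k : α} (hk : 0 < y k)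
    (w : α → ℕ) : ∃ z : α → ℕ, z + Pi.single k 1 = y + w := by
  refine ⟨y + w - Pi.single k 1, tsub_add_cancel_of_le fun l => ?_⟩
  rcases eq_or_ne l k with rfl | hl <;> simp [*]; omega

lemma add_single_le {α : Type*} [DecidableEq α] {f b : α → ℕ} {i : α} (h : f ≤ b)
    (hi : f i < b i) : f + Pi.single i 1 ≤ b := by
  intro l
  rcases eq_or_ne l i with rfl | hl
  · simpa using hi
  · simpa [hl] using h l

section Bundles

variable {Ω : Type*} [Fintype Ω] {b : Ω → ℕ} {dj : ℕ} {v : Ω → ℕ} {p : Ω → ℝ}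
  {y z : Ω → ℕ} {i k : Ω}

lemma utility_add (v : Ω → ℕ) (p : Ω → ℝ) (y z : Ω → ℕ) :
    utility v p (y + z) = utility v p y + utility v p z := by
  simp only [utility, Pi.add_apply, Nat.cast_add, mul_add, sum_add_distrib]

lemma utility_zero (v : Ω → ℕ) (p : Ω → ℝ) : utility v p 0 = 0 := by
  simp [utility]

lemma IsBundle.mono (hy : IsBundle b dj y) (h : z ≤ y) : IsBundle b dj z :=
  ⟨fun i => (h i).trans (hy.1 i), (sum_le_sum fun i _ => h i).trans hy.2⟩

lemma InDemand.of_utility_eq (hy : InDemand b dj v p y) (hz : IsBundle b dj z)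
    (h : utility v p z = utility v p y) : InDemand b dj v p z :=
  ⟨hz, fun w hw => h ▸ hy.2 w hw⟩

lemma InDemand.utility_le_of_add_eq (hy : InDemand b dj v p y) (hz : IsBundle b dj z)
    {u w : Ω → ℕ} (h : z + u = y + w) : utility v p w ≤ utility v p u := by
  have := hy.2 z hz
  have := congrArg (utility v p) h
  rw [utility_add, utility_add] at this
  linarith

variable [DecidableEq Ω]

lemma utility_single (v : Ω → ℕ) (p : Ω → ℝ) (i : Ω) :
    utility v p (Pi.single i 1) = v i - p i := by
  simp [utility, Pi.single_apply, apply_ite]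

lemma sum_add_single (y : Ω → ℕ) (i : Ω) :
    ∑ k, (y + Pi.single i 1 : Ω → ℕ) k = ∑ k, y k + 1 := by
  simp [sum_add_distrib]

lemma IsBundle.add_single (hy : IsBundle b dj y) (hsum : ∑ k, y k < dj) (hi : y i < b i) :
    IsBundle b dj (y + Pi.single i 1) := by
  refine ⟨fun l => ?_, by rw [sum_add_single]; omega⟩
  rcases eq_or_ne l i with rfl | hl <;> simp [*, hy.1 l]

lemma IsBundle.of_add_single_eq (hy : IsBundle b dj y) (hi : y i < b i)
    (h : z + Pi.single k 1 = y + Pi.single i 1) : IsBundle b dj z := by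
  refine ⟨fun l => ?_, ?_⟩
  · have hl := congrFun h l
    have := hy.1 l
    simp only [Pi.add_apply, Pi.single_apply] at hl
    split_ifs at hl <;> subst_vars <;> omega
  · have := congrArg (fun f => ∑ l, f l) h
    simp only [sum_add_single] at this
    have := hy.2
    omega

lemma InDemand.margin_nonneg (hy : InDemand b dj v p y) (hk : 0 < y k) :
    0 ≤ (v k : ℝ) - p k := by
  obtain ⟨z, hz⟩ := exists_add_single_eq hk 0
  have hzy : z ≤ y := fun l => by simpa using le_self_add.trans_eq (congrFun hz l)
  simpa [utility_single, utility_zero] using hy.utility_le_of_add_eq (hy.1.mono hzy) hz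

lemma InDemand.margin_nonpos (hy : InDemand b dj v p y) (hsum : ∑ k, y k < dj)
    (hi : y i < b i) : (v i : ℝ) - p i ≤ 0 := by
  have := hy.utility_le_of_add_eq (hy.1.add_single hsum hi) (u := 0) (add_zero _)
  simpa [utility_single, utility_zero] using this

lemma InDemand.margin_le (hy : InDemand b dj v p y) (hk : 0 < y k) (hi : y i < b i) :
    (v i : ℝ) - p i ≤ v k - p k := by
  obtain ⟨z, hz⟩ := exists_add_single_eq hk (Pi.single i 1)
  simpa [utility_single] using hy.utility_le_of_add_eq (hy.1.of_add_single_eq hi hz) hz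

lemma InDemand.add_single (hy : InDemand b dj v p y) (hsum : ∑ k, y k < dj) (hi : y i < b i)
    (hm : (v i : ℝ) = p i) : InDemand b dj v p (y + Pi.single i 1) :=
  hy.of_utility_eq (hy.1.add_single hsum hi) <| by
    rw [utility_add, utility_single, hm, sub_self, add_zero]

lemma InDemand.of_add_single_eq (hy : InDemand b dj v p y) (hi : y i < b i)
    (hm : (v i : ℝ) - p i = v k - p k) (h : z + Pi.single k 1 = y + Pi.single i 1) :
    InDemand b dj v p z := by
  refine hy.of_utility_eq (hy.1.of_add_single_eq hi h) ?_
  have := congrArg (utility v p) h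
  rw [utility_add, utility_add, utility_single, utility_single, hm] at this
  linarith

lemma InDemand.margin_eq_of_exchange (hy : InDemand b dj v p y) (hz : InDemand b dj v p z)
    {g t : Ω} (ht : y t < z t) (hg : z g < y g) : (v g : ℝ) - p g = v t - p t :=
  le_antisymm (hz.margin_le (by omega) (hg.trans_le (hy.1.1 g)))
    (hy.margin_le (by omega) (ht.trans_le (hz.1.1 t)))

lemma InDemand.price_eq_of_exchange (hy : InDemand b dj v p y) (hz : InDemand b dj v p z)
    (hsum : ∑ k, y k < dj) {t : Ω} (ht : y t < z t) : (v t : ℝ) = p t := by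
  have := hy.margin_nonpos hsum (ht.trans_le (hz.1.1 t))
  have := hz.margin_nonneg (k := t) (by omega)
  linarith

end Bundles

section Allocations

variable {Ω N : Type*}

def withBundle [DecidableEq N] (x : Ω → N → ℕ) (j : N) (z : Ω → ℕ) : Ω → N → ℕ :=
  fun i => Function.update (x i) j (z i)

@[simp]
lemma withBundle_self [DecidableEq N] (x : Ω → N → ℕ) (j : N) (z : Ω → ℕ) (i : Ω) :
    withBundle x j z i j = z i := by
  simp [withBundle]

lemma withBundle_of_ne [DecidableEq N] (x : Ω → N → ℕ) {j j' : N} (z : Ω → ℕ) (h : j' ≠ j)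
    (i : Ω) : withBundle x j z i j' = x i j' := by
  simp [withBundle, h]

variable [Fintype N]

def sold (x : Ω → N → ℕ) (i : Ω) : ℕ := ∑ j, x i j

lemma le_sold (x : Ω → N → ℕ) (i : Ω) (j : N) : x i j ≤ sold x i :=
  single_le_sum (fun j _ => Nat.zero_le (x i j)) (mem_univ j)

lemma sold_withBundle_add [DecidableEq N] (x : Ω → N → ℕ) (j : N) (z : Ω → ℕ) :
    sold (withBundle x j z) + (fun i => x i j) = sold x + z := by
  funext i
  simp only [sold, withBundle, Pi.add_apply, sum_update_of_mem (mem_univ j),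
    sum_eq_add_sum_sdiff_singleton_of_mem (mem_univ j) (x i)]
  ring

variable [Fintype Ω] {b : Ω → ℕ} {d : N → ℕ} {v : Ω → N → ℕ} {p : Ω → ℝ} {x : Ω → N → ℕ}

lemma Stable.sold_le (hx : Stable b d v p x) : sold x ≤ b := hx.1.1

lemma Stable.le (hx : Stable b d v p x) : x ≤ fun i _ => b i :=
  fun i j => (le_sold x i j).trans (hx.1.1 i)

lemma exists_stable_max [DecidableEq Ω] [DecidableEq N] (f : (Ω → N → ℕ) → ℕ)
    {P : (Ω → N → ℕ) → Prop} (h : ∃ x, Stable b d v p x ∧ P x) :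
    ∃ x, (Stable b d v p x ∧ P x) ∧ ∀ y, Stable b d v p y → P y → f y ≤ f x := by
  obtain ⟨x, hx, hmax⟩ := Set.exists_max_image {x | Stable b d v p x ∧ P x} f
    ((Set.finite_Iic fun i (_ : N) => b i).subset fun x hx => hx.1.le) h
  exact ⟨x, hx, fun y hy hPy => hmax y ⟨hy, hPy⟩⟩

variable [DecidableEq N] {j : N}

lemma Stable.stable_withBundle (hx : Stable b d v p x) {z : Ω → ℕ}
    (hz : InDemand b (d j) (fun i => v i j) p z) (hsold : sold (withBundle x j z) ≤ b) :
    Stable b d v p (withBundle x j z) := by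
  have hcol : ∀ j', InDemand b (d j') (fun i => v i j') p (fun i => withBundle x j z i j') := by
    intro j'
    rcases eq_or_ne j' j with rfl | hj
    · simpa using hz
    · simpa only [withBundle_of_ne x z hj] using hx.2 j'
  exact ⟨⟨hsold, fun j' => (hcol j').1.2⟩, hcol⟩

variable [DecidableEq Ω]

lemma Stable.exists_exchange (hx : Stable b d v p x) {i k : Ω} (hk : 0 < x k j)
    (hi : x i j < b i) (hm : (v i j : ℝ) - p i = v k j - p k)
    (hfeas : sold x + Pi.single i 1 ≤ b + Pi.single k 1) :
    ∃ y, Stable b d v p y ∧ sold y + Pi.single k 1 = sold x + Pi.single i 1 ∧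
      (∀ j, ∑ l, y l j = ∑ l, x l j) ∧ (∀ j, y k j ≤ x k j) ∧
      ∀ l, l ≠ k → l ≠ i → ∀ j, y l j = x l j := by
  obtain ⟨z, hz⟩ := exists_add_single_eq (y := fun l => x l j) hk (Pi.single i 1)
  have hzl : ∀ l, z l + (Pi.single k 1 : Ω → ℕ) l = x l j + (Pi.single i 1 : Ω → ℕ) l :=
    fun l => congrFun hz l
  have hsold : sold (withBundle x j z) + Pi.single k 1 = sold x + Pi.single i 1 := by
    funext l
    have := congrFun (sold_withBundle_add x j z) l
    have := hzl l
    simp only [Pi.add_apply] at *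
    omega
  refine ⟨withBundle x j z, hx.stable_withBundle ((hx.2 j).of_add_single_eq hi hm hz)
    fun l => ?_, hsold, fun j' => ?_, fun j' => ?_, fun l hlk hli j' => ?_⟩
  · have := congrFun hsold l
    have := hfeas l
    simp only [Pi.add_apply] at *
    omega
  all_goals rcases eq_or_ne j' j with rfl | hj
  · have := congrArg (fun f => ∑ l, f l) hz
    simpa only [sum_add_single, add_left_inj, withBundle_self] using this
  · simp only [withBundle_of_ne x z hj]
  · have := hzl k
    simp only [withBundle_self]
    simp only [Pi.single_apply, if_true] at this
    split_ifs at this <;> omega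
  · rw [withBundle_of_ne x z hj]
  · simpa [hlk, hli] using hzl l
  · rw [withBundle_of_ne x z hj]

lemma Stable.exists_add_single (hx : Stable b d v p x) {i : Ω} (hsum : ∑ l, x l j < d j)
    (hi : x i j < b i) (hm : (v i j : ℝ) = p i) (hfeas : sold x + Pi.single i 1 ≤ b) :
    ∃ y, Stable b d v p y ∧ sold y = sold x + Pi.single i 1 := by
  have hsold : sold (withBundle x j ((fun l => x l j) + Pi.single i 1)) =
      sold x + Pi.single i 1 := by
    have := sold_withBundle_add x j ((fun l => x l j) + Pi.single i 1)
    rwa [← add_assoc, add_right_comm, add_left_inj] at this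
  exact ⟨_, hx.stable_withBundle ((hx.2 j).add_single hsum hi hm) (hsold ▸ hfeas), hsold⟩

end Allocations

section Exchange

variable {Ω N : Type*} [Fintype Ω] [Fintype N] [DecidableEq Ω] [DecidableEq N]
  {b : Ω → ℕ} {d : N → ℕ} {v : Ω → N → ℕ} {p : Ω → ℝ} {x : Ω → N → ℕ} {i₀ : Ω}

def Exchangeable (b : Ω → ℕ) (v : Ω → N → ℕ) (p : Ω → ℝ) (x : Ω → N → ℕ) (k i : Ω) : Prop :=
  ∃ j, 0 < x k j ∧ x i j < b i ∧ (v i j : ℝ) - p i = v k j - p k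

def ExchangeReach (b : Ω → ℕ) (v : Ω → N → ℕ) (p : Ω → ℝ) (x : Ω → N → ℕ) (i₀ : Ω) :
    ℕ → Ω → Prop
  | 0, k => k = i₀
  | n + 1, k => ExchangeReach b v p x i₀ n k ∨
      ∃ i, Exchangeable b v p x k i ∧ ExchangeReach b v p x i₀ n i

-- The exchanges are made from the `i₀` end of the chain backwards: as `y` still agrees with `x`
-- on every object out of reach `n`, the buyer giving up `k` in the last step still holds it.
theorem Stable.exists_shift (hx : Stable b d v p x) (hroom : sold x + Pi.single i₀ 1 ≤ b)
    (n : ℕ) {k : Ω} (hk : ExchangeReach b v p x i₀ n k) :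
    ∃ y, Stable b d v p y ∧ sold y + Pi.single k 1 = sold x + Pi.single i₀ 1 ∧
      (∀ j, ∑ i, y i j = ∑ i, x i j) ∧ (∀ j, y k j ≤ x k j) ∧
      ∀ i, ¬ExchangeReach b v p x i₀ n i → ∀ j, y i j = x i j := by
  induction n generalizing k with
  | zero =>
    subst hk
    exact ⟨x, hx, rfl, fun _ => rfl, fun _ => le_rfl, fun _ _ _ => rfl⟩
  | succ n ih =>
    by_cases hkn : ExchangeReach b v p x i₀ n k
    · obtain ⟨y, hy, hsold, hrow, hle, hagree⟩ := ih hkn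
      exact ⟨y, hy, hsold, hrow, hle, fun l hl => hagree l fun h => hl (Or.inl h)⟩
    obtain ⟨i, ⟨j, hkj, hij, hm⟩, hi⟩ := hk.resolve_left hkn
    obtain ⟨y, hy, hsold, hrow, hle, hagree⟩ := ih hi
    have hyk : ∀ j, y k j = x k j := hagree k hkn
    obtain ⟨y', hy', hsold', hrow', hle', hagree'⟩ := hy.exists_exchange (j := j)
      (hyk j ▸ hkj) ((hle j).trans_lt hij) hm (hsold ▸ hroom.trans le_self_add)
    refine ⟨y', hy', hsold'.trans hsold, fun j' => (hrow' j').trans (hrow j'),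
      fun j' => hyk j' ▸ hle' j', fun l hl j' => ?_⟩
    rw [hagree' l (fun h => hl (h ▸ Or.inr ⟨i, ⟨j, hkj, hij, hm⟩, hi⟩))
      (fun h => hl (h ▸ Or.inl hi)) j', hagree l (fun h => hl (Or.inl h))]

end Exchange

section Clearing

variable {Ω N : Type*} [Fintype Ω] [Fintype N] {b : Ω → ℕ} {d : N → ℕ} {v : Ω → N → ℕ}
  {p : Ω → ℝ} {x : Ω → N → ℕ}

def DemandMaximalOn (b : Ω → ℕ) (d : N → ℕ) (v : Ω → N → ℕ) (p : Ω → ℝ) (A : Finset Ω)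
    (x : Ω → N → ℕ) : Prop :=
  ∀ j z, InDemand b (d j) (fun i => v i j) p z → ∑ i ∈ A, z i ≤ ∑ i ∈ A, x i j

lemma sum_pos_of_sold_add_eq [DecidableEq Ω] {i₀ : Ω} {y : Ω → N → ℕ} {u : Ω → ℕ}
    (hmax : ∀ y, Stable b d v p y → ∑ i with 0 < p i, sold y i ≤ ∑ i with 0 < p i, sold x i)
    (hi₀ : 0 < p i₀) (hy : Stable b d v p y) (h : sold y + u = sold x + Pi.single i₀ 1) :
    0 < ∑ i with 0 < p i, u i := by
  have := congrArg (fun f => ∑ i with 0 < p i, f i) h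
  simp only [Pi.add_apply, sum_add_distrib, sum_pi_single', mem_filter, mem_univ, true_and,
    hi₀, if_true] at this
  have := hmax y hy
  omega

theorem exists_demandMaximalOn_of_sold_lt [DecidableEq Ω] [DecidableEq N] {i₀ : Ω}
    (hx : Stable b d v p x)
    (hmax : ∀ y, Stable b d v p y → ∑ i with 0 < p i, sold y i ≤ ∑ i with 0 < p i, sold x i)
    (hi₀ : 0 < p i₀) (hslack : sold x i₀ < b i₀) :
    ∃ A : Finset Ω, i₀ ∈ A ∧ (∀ i ∈ A, 0 < p i) ∧ DemandMaximalOn b d v p A x := by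
  classical
  have hroom : sold x + Pi.single i₀ 1 ≤ b := add_single_le hx.sold_le hslack
  set A := univ.filter fun k => ∃ n, ExchangeReach b v p x i₀ n k
  have hmem : ∀ {k}, k ∈ A ↔ ∃ n, ExchangeReach b v p x i₀ n k := by simp [A]
  refine ⟨A, hmem.2 ⟨0, rfl⟩, fun k hk => ?_, fun j z hz => ?_⟩
  · obtain ⟨n, hn⟩ := hmem.1 hk
    obtain ⟨y, hy, hsold, -⟩ := hx.exists_shift hroom n hn
    have := sum_pos_of_sold_add_eq hmax hi₀ hy hsold
    simp only [sum_pi_single', mem_filter, mem_univ, true_and] at this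
    split_ifs at this with h
    exacts [h, (lt_irrefl 0 this).elim]
  by_contra hlt
  obtain ⟨t, htA, ht⟩ := exists_lt_of_sum_lt (not_le.1 hlt)
  obtain ⟨n, hn⟩ := hmem.1 htA
  by_cases hg : ∃ g ∉ A, z g < x g j
  · obtain ⟨g, hgA, hg⟩ := hg
    refine hgA (hmem.2 ⟨n + 1, Or.inr ⟨t, ⟨j, by omega, ht.trans_le (hz.1.1 t), ?_⟩, hn⟩⟩)
    exact ((hx.2 j).margin_eq_of_exchange hz ht hg).symm
  push Not at hg
  have hsum : ∑ i, x i j < d j := by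
    refine lt_of_lt_of_le ?_ hz.1.2
    rw [← sum_add_sum_compl A, ← sum_add_sum_compl A z]
    exact add_lt_add_of_lt_of_le (not_le.1 hlt) (sum_le_sum fun i hi => hg i (mem_compl.1 hi))
  obtain ⟨y, hy, hsold, hrow, hle, -⟩ := hx.exists_shift hroom n hn
  obtain ⟨y', hy', hsold'⟩ := hy.exists_add_single (j := j) (hrow j ▸ hsum)
    ((hle j).trans_lt (ht.trans_le (hz.1.1 t))) ((hx.2 j).price_eq_of_exchange hz hsum ht)
    (hsold ▸ hroom)
  simpa using sum_pos_of_sold_add_eq hmax hi₀ hy' (u := 0) (by rw [add_zero, hsold', hsold])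

end Clearing

section Lowering

variable {Ω N : Type*} [Fintype Ω] [Fintype N] [DecidableEq Ω] {b : Ω → ℕ} {d : N → ℕ}
  {v : Ω → N → ℕ} {p : Ω → ℝ} {x : Ω → N → ℕ}

lemma utility_lower (u : Ω → ℕ) (p : Ω → ℝ) (A : Finset Ω) (ε : ℝ) (y : Ω → ℕ) :
    utility u (fun i => if i ∈ A then p i - ε else p i) y =
      utility u p y + ε * ∑ i ∈ A, (y i : ℝ) := by
  have h : ∀ i, ((u i : ℝ) - if i ∈ A then p i - ε else p i) * y i =
      (u i - p i) * y i + if i ∈ A then ε * y i else 0 := by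
    intro i
    split_ifs <;> ring
  simp only [utility, h, sum_add_distrib, sum_ite_mem, univ_inter, mul_sum]

theorem exists_competitive_lt_of_demandMaximalOn (hp : ∀ i, 0 ≤ p i) {A : Finset Ω}
    (hA : ∀ i ∈ A, 0 < p i) (hx : Stable b d v p x) (hxA : DemandMaximalOn b d v p A x) :
    ∃ q, Competitive b d v q ∧ ∀ i ∈ A, q i < p i := by
  set q : ℝ → Ω → ℝ := fun ε i => if i ∈ A then p i - ε else p i
  have hbundle : ∀ j, ∀ w ∈ Set.Iic b, ∀ᶠ ε in 𝓝 0, 0 ≤ ε → IsBundle b (d j) w →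
      utility (fun i => v i j) (q ε) w ≤ utility (fun i => v i j) (q ε) (fun i => x i j) := by
    intro j w _
    by_cases hw : IsBundle b (d j) w
    · simp only [q, utility_lower]
      rcases ((hx.2 j).2 w hw).lt_or_eq with hlt | heq
      · filter_upwards [ContinuousAt.eventually_lt
          (f := fun ε => utility (fun i => v i j) p w + ε * ∑ i ∈ A, (w i : ℝ))
          (g := fun ε => utility (fun i => v i j) p (fun i => x i j) +
            ε * ∑ i ∈ A, (x i j : ℝ)) (by fun_prop) (by fun_prop) (by simpa using hlt)]
          with ε hε _ _
        exact hε.le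
      · refine Eventually.of_forall fun ε hε _ => ?_
        have : ∑ i ∈ A, (w i : ℝ) ≤ ∑ i ∈ A, (x i j : ℝ) := by
          exact_mod_cast hxA j w ((hx.2 j).of_utility_eq hw heq)
        rw [heq]
        gcongr
    · exact Eventually.of_forall fun _ _ h => (hw h).elim
  obtain ⟨ε, ⟨hεA, hεx⟩, hε⟩ := ((((eventually_all_finset A).2 fun i hi =>
      eventually_lt_nhds (hA i hi)).and (eventually_all.2 fun j =>
        (Set.finite_Iic b).eventually_all.2 (hbundle j))).filter_mono nhdsWithin_le_nhds).and
      (self_mem_nhdsWithin (s := Set.Ioi 0)) |>.exists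
  refine ⟨q ε, ⟨fun i => ?_, x, hx.1, fun j => ⟨(hx.2 j).1, fun w hw => ?_⟩⟩, fun i hi => ?_⟩
  · by_cases hi : i ∈ A
    · simpa [q, hi] using (hεA i hi).le
    · simpa [q, hi] using hp i
  · exact hεx j w hw.1 (le_of_lt hε) hw
  · simpa [q, hi] using hε

end Lowering

theorem total_sold_eq_min {Ω N : Type*} [Fintype Ω] [Fintype N] [DecidableEq Ω] [DecidableEq N]
    {b : Ω → ℕ} {d : N → ℕ} {v : Ω → N → ℕ} {p : Ω → ℝ} {x : Ω → N → ℕ}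
    (hp : ∀ i, 0 ≤ p i) (hx : Stable b d v p x) (hP : ∀ i, 0 < p i → sold x i = b i)
    (hmax : ∀ y, Stable b d v p y → (∀ i, 0 < p i → sold y i = b i) →
      ∑ i, sold y i ≤ ∑ i, sold x i) :
    ∑ i, sold x i = min (∑ i, b i) (∑ j, d j) := by
  have hsum_comm : ∑ i, sold x i = ∑ j, ∑ i, x i j := sum_comm
  refine le_antisymm (le_min (sum_le_sum fun i _ => hx.sold_le i) ?_) (not_lt.1 fun hlt => ?_)
  · rw [hsum_comm]
    exact sum_le_sum fun j _ => hx.1.2 j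
  rw [lt_min_iff, hsum_comm] at hlt
  obtain ⟨i, -, hi⟩ := exists_lt_of_sum_lt (hsum_comm ▸ hlt.1)
  obtain ⟨j, -, hj⟩ := exists_lt_of_sum_lt hlt.2
  have hpi : p i = 0 := le_antisymm (not_lt.1 fun h => hi.ne (hP i h)) (hp i)
  have hxij : x i j < b i := (le_sold x i j).trans_lt hi
  have hm : (v i j : ℝ) = p i := by
    have := (hx.2 j).margin_nonpos hj hxij
    rw [hpi] at this ⊢
    exact le_antisymm (by simpa using this) (Nat.cast_nonneg _)
  obtain ⟨y, hy, hsold⟩ := hx.exists_add_single hj hxij hm (add_single_le hx.sold_le hi)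
  have hyP : ∀ k, 0 < p k → sold y k = b k := fun k hk => by
    have hki : k ≠ i := fun h => (h ▸ hk).ne' hpi
    simp [hsold, hki, hP k hk]
  have := hmax y hy hyP
  rw [hsold, sum_add_single] at this
  omega

/-- at the componentwise minimum competitive prices there is a stable
allocation that completely sells every positively priced object and sells as much as
possible. -/
theorem min_competitive_prices_admit_market_clearing_allocation
    {Ω N : Type*} [Fintype Ω] [Fintype N]
    (b : Ω → ℕ) (d : N → ℕ) (v : Ω → N → ℕ) (pstar : Ω → ℝ)
    (hcomp : Competitive b d v pstar)
    (hmin : ∀ q : Ω → ℝ, Competitive b d v q → ∀ i, pstar i ≤ q i) :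
    ∃ x : Ω → N → ℕ, Feasible b d x ∧
      (∀ j, InDemand b (d j) (fun i => v i j) pstar (fun i => x i j)) ∧
      (∀ i, 0 < pstar i → ∑ j, x i j = b i) ∧
      ∑ i, ∑ j, x i j = min (∑ i, b i) (∑ j, d j) := by
  classical
  obtain ⟨hp, x₀, hx₀⟩ := hcomp
  obtain ⟨x₁, ⟨hx₁, -⟩, hx₁max⟩ :=
    exists_stable_max (fun x => ∑ i with 0 < pstar i, sold x i) (P := fun _ => True)
      ⟨x₀, hx₀, trivial⟩
  have hclear : ∀ i, 0 < pstar i → sold x₁ i = b i := by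
    intro i hi
    by_contra hne
    obtain ⟨A, hiA, hApos, hx₁A⟩ := exists_demandMaximalOn_of_sold_lt hx₁
      (fun y hy => hx₁max y hy trivial) hi ((hx₁.sold_le i).lt_of_ne hne)
    obtain ⟨q, hq, hqA⟩ := exists_competitive_lt_of_demandMaximalOn hp hApos hx₁ hx₁A
    exact (hqA i hiA).not_ge (hmin q hq i)
  obtain ⟨x, ⟨hx, hxP⟩, hxmax⟩ :=
    exists_stable_max (fun x => ∑ i, sold x i) (P := fun x => ∀ i, 0 < pstar i → sold x i = b i)
      ⟨x₁, hx₁, hclear⟩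
  exact ⟨x, hx.1, hx.2, hxP, total_sold_eq_min hp hx hxP hxmax⟩
end

section
/- Structure of preferred bundles for truncated additive valuations: for every buyer j and price vector p, a bundle y for j belongs to the demand set D_j(p) if and only if y i = b i for every i ∈ Ω'_j(p), ∑_{i∈Ω''_j(p)} y i = d''_j(p), and y i = 0 for every object i outside Ω'_j(p) ∪ Ω''_j(p) ∪ Ω'''_j(p). -/
/-!
Buyer `j`'s problem is the linear program `max ∑ u i * y i` over `0 ≤ y ≤ b`, `∑ y ≤ d j`.
For a multiplier `t ≥ 0` of the demand constraint,
`∑ u i * y i ≤ ∑ max (u i - t) 0 * b i + t * d j`, with equality iff `y` fills every object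
with `u i > t`, avoids every object with `u i < t` and, if `t > 0`, uses the whole demand.
When the objects of payoff at least `θ` cover the demand, take `t = θ`; otherwise every positive
payoff is at least `θ` and `t = 0` works. In both cases these slackness conditions are exactly
the tier description, and some bundle satisfies them, so the bound is the maximal utility.
-/

open Finset

section TierDefs

variable {Ω N : Type*}

/-- The set `P` of positive payoffs `u i`. -/
noncomputable def posPayoffs [Fintype Ω] (u : Ω → ℝ) : Finset ℝ :=
  (Finset.univ.image u).filter (fun t => 0 < t)

/-- The threshold payoff `θ_j(p)`: the largest positive payoff value `t` such that the
supply of items with payoff at least `t` covers the demand, if it exists; otherwise the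
minimum positive payoff value (and junk value `0` if there is no positive payoff). -/
noncomputable def theta [Fintype Ω] (b : Ω → ℕ) (dj : ℕ) (u : Ω → ℝ) : ℝ :=
  if hQ : ((posPayoffs u).filter
      (fun t => dj ≤ ∑ i ∈ Finset.univ.filter (fun i => t ≤ u i), b i)).Nonempty then
    ((posPayoffs u).filter
      (fun t => dj ≤ ∑ i ∈ Finset.univ.filter (fun i => t ≤ u i), b i)).max' hQ
  else if hP : (posPayoffs u).Nonempty then (posPayoffs u).min' hP
  else 0

/-- `Ω'_j(p)`: objects with payoff strictly above the threshold. -/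
noncomputable def OmegaP [Fintype Ω] (b : Ω → ℕ) (dj : ℕ) (u : Ω → ℝ) : Finset Ω :=
  if dj = 0 ∨ posPayoffs u = ∅ then ∅
  else Finset.univ.filter (fun i => theta b dj u < u i)

/-- `Ω''_j(p)`: objects with payoff equal to the threshold. -/
noncomputable def OmegaPP [Fintype Ω] (b : Ω → ℕ) (dj : ℕ) (u : Ω → ℝ) : Finset Ω :=
  if dj = 0 ∨ posPayoffs u = ∅ then ∅
  else Finset.univ.filter (fun i => u i = theta b dj u)

/-- `Ω'''_j(p)`: objects with payoff zero. -/
noncomputable def OmegaPPP [Fintype Ω] (u : Ω → ℝ) : Finset Ω :=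
  Finset.univ.filter (fun i => u i = 0)

/-- `d'_j(p)`. -/
noncomputable def dPr [Fintype Ω] (b : Ω → ℕ) (dj : ℕ) (u : Ω → ℝ) : ℕ :=
  ∑ i ∈ OmegaP b dj u, b i

/-- `d''_j(p)`. -/
noncomputable def dPPr [Fintype Ω] (b : Ω → ℕ) (dj : ℕ) (u : Ω → ℝ) : ℕ :=
  min (∑ i ∈ OmegaPP b dj u, b i) (dj - dPr b dj u)

/-- Payoff function of buyer `j` at prices `p`. -/
noncomputable def payoff (v : Ω → N → ℕ) (p : Ω → ℝ) (j : N) (i : Ω) : ℝ :=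
  (v i j : ℝ) - p i

/-- `d_p(I)`: total demand that must be served from the item set `I`
(here `a - b` is truncated subtraction on `ℕ`, i.e. `max (0, a - b)`). -/
noncomputable def overDemand [Fintype Ω] [Fintype N] [DecidableEq Ω] (b : Ω → ℕ)
    (d : N → ℕ) (v : Ω → N → ℕ) (p : Ω → ℝ) (I : Finset Ω) : ℕ :=
  ∑ j : N,
    ((∑ i ∈ OmegaP b (d j) (payoff v p j) ∩ I, b i) +
      (dPPr b (d j) (payoff v p j) -
        ∑ i ∈ OmegaPP b (d j) (payoff v p j) \ I, min (b i) (dPPr b (d j) (payoff v p j))))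

end TierDefs

section Duality

variable {Ω : Type*} [Fintype Ω] {b : Ω → ℕ} {dj : ℕ}

lemma IsBundle.eq_zero {z : Ω → ℕ} (hz : IsBundle b 0 z) : z = 0 :=
  funext fun i => sum_eq_zero_iff.mp (Nat.le_zero.mp hz.2) i (mem_univ i)

/-- Complementary slackness between the bundle `z` and the multiplier `t` of the demand
constraint `∑ i, z i ≤ dj` in the linear program `max ∑ i, u i * z i` over bundles. -/
def ComplementarySlack (b : Ω → ℕ) (dj : ℕ) (u : Ω → ℝ) (t : ℝ) (z : Ω → ℕ) : Prop :=
  (∀ i, t < u i → z i = b i) ∧ (∀ i, u i < t → z i = 0) ∧ (0 < t → ∑ i, z i = dj)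

noncomputable def dualValue (b : Ω → ℕ) (dj : ℕ) (u : Ω → ℝ) (t : ℝ) : ℝ :=
  ∑ i, max (u i - t) 0 * b i + t * dj

lemma mul_le_max_zero_mul {a x y : ℝ} (hx : 0 ≤ x) (hxy : x ≤ y) : a * x ≤ max a 0 * y := by
  rcases le_total a 0 with ha | ha
  · rw [max_eq_right ha, zero_mul]
    exact mul_nonpos_of_nonpos_of_nonneg ha hx
  · rw [max_eq_left ha]
    exact mul_le_mul_of_nonneg_left hxy ha

lemma mul_eq_max_zero_mul_iff {a x y : ℝ} :
    a * x = max a 0 * y ↔ (0 < a → x = y) ∧ (a < 0 → x = 0) := by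
  rcases lt_trichotomy a 0 with ha | rfl | ha
  · simp [max_eq_right ha.le, ha, ha.ne, not_lt.mpr ha.le]
  · simp
  · simp [max_eq_left ha.le, ha, ha.ne', not_lt.mpr ha.le]

lemma sum_mul_eq_add (u : Ω → ℝ) (t : ℝ) (z : Ω → ℕ) :
    ∑ i, u i * z i = ∑ i, (u i - t) * z i + t * ((∑ i, z i : ℕ) : ℝ) := by
  rw [Nat.cast_sum, mul_sum, ← sum_add_distrib]
  exact sum_congr rfl fun i _ => by ring

variable {u : Ω → ℝ} {t : ℝ} {z : Ω → ℕ}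

lemma sum_mul_le_dualValue (ht : 0 ≤ t) (hz : IsBundle b dj z) :
    ∑ i, u i * z i ≤ dualValue b dj u t := by
  rw [sum_mul_eq_add u t, dualValue]
  exact add_le_add
    (sum_le_sum fun i _ => mul_le_max_zero_mul (Nat.cast_nonneg _) (Nat.cast_le.mpr (hz.1 i)))
    (mul_le_mul_of_nonneg_left (Nat.cast_le.mpr hz.2) ht)

lemma sum_mul_eq_dualValue_iff (ht : 0 ≤ t) (hz : IsBundle b dj z) :
    ∑ i, u i * z i = dualValue b dj u t ↔ ComplementarySlack b dj u t z := by
  have hterm : ∀ i ∈ univ, (u i - t) * z i ≤ max (u i - t) 0 * b i :=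
    fun i _ => mul_le_max_zero_mul (Nat.cast_nonneg _) (Nat.cast_le.mpr (hz.1 i))
  have hdemand : t * ((∑ i, z i : ℕ) : ℝ) ≤ t * dj :=
    mul_le_mul_of_nonneg_left (Nat.cast_le.mpr hz.2) ht
  have hdemand_eq : t * ((∑ i, z i : ℕ) : ℝ) = t * dj ↔ (0 < t → ∑ i, z i = dj) := by
    rcases ht.eq_or_lt with rfl | ht
    · simp
    · rw [mul_right_inj' ht.ne', Nat.cast_inj]
      exact ⟨fun h _ => h, fun h => h ht⟩
  rw [sum_mul_eq_add u t, dualValue, add_eq_add_iff_eq_and_eq (sum_le_sum hterm) hdemand,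
    sum_eq_sum_iff_of_le hterm, hdemand_eq]
  simp only [mem_univ, true_imp_iff, mul_eq_max_zero_mul_iff, sub_pos,
    sub_neg, Nat.cast_inj, Nat.cast_eq_zero, forall_and, ComplementarySlack, and_assoc]

/-- A bundle meeting the slackness conditions attains the dual bound, so the maximal utility
equals `dualValue`. -/
lemma inDemand_iff_complementarySlack {v : Ω → ℕ} {p : Ω → ℝ} (ht : 0 ≤ t) {w y : Ω → ℕ}
    (hw : IsBundle b dj w) (hwt : ComplementarySlack b dj (fun i => v i - p i) t w)
    (hy : IsBundle b dj y) :
    InDemand b dj v p y ↔ ComplementarySlack b dj (fun i => v i - p i) t y := by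
  have hwv := (sum_mul_eq_dualValue_iff ht hw).mpr hwt
  rw [← sum_mul_eq_dualValue_iff ht hy]
  constructor
  · rintro ⟨-, hopt⟩
    exact le_antisymm (sum_mul_le_dualValue ht hy) (hwv ▸ hopt w hw)
  · intro hyv
    exact ⟨hy, fun z hz => (sum_mul_le_dualValue ht hz).trans_eq hyv.symm⟩

lemma exists_le_le_sum_eq {g h : Ω → ℕ} {m : ℕ} (hgh : g ≤ h) (hgm : ∑ i, g i ≤ m)
    (hmh : m ≤ ∑ i, h i) : ∃ z, g ≤ z ∧ z ≤ h ∧ ∑ i, z i = m := by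
  classical
  induction m, hgm using Nat.le_induction with
  | base => exact ⟨g, le_rfl, hgh, rfl⟩
  | succ m _ ih =>
    obtain ⟨z, hgz, hzh, hz⟩ := ih (by omega)
    obtain ⟨k, -, hk⟩ := exists_lt_of_sum_lt (hz ▸ (by omega : m < ∑ i, h i))
    refine ⟨z + Pi.single k 1, hgz.trans le_self_add, fun i => ?_, ?_⟩
    · rcases eq_or_ne i k with rfl | hik
      · simpa using hk
      · simpa [hik] using hzh i
    · simp only [Pi.add_apply]
      rw [sum_add_distrib, sum_pi_single', if_pos (mem_univ k), hz]

lemma exists_complementarySlack_of_le_of_le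
    (hlow : ∑ i ∈ univ.filter (t < u ·), b i ≤ dj) (hhigh : dj ≤ ∑ i ∈ univ.filter (t ≤ u ·), b i) :
    ∃ w, IsBundle b dj w ∧ ComplementarySlack b dj u t w := by
  classical
  rw [sum_filter] at hlow hhigh
  obtain ⟨w, hgw, hwh, hw⟩ := exists_le_le_sum_eq
    (fun i => by by_cases hi : t < u i <;> simp [hi, le_of_lt]) hlow hhigh
  refine ⟨w, ⟨fun i => (hwh i).trans (by dsimp only; split_ifs <;> simp), hw.le⟩,
    fun i hi => le_antisymm ?_ ?_, fun i hi => ?_, fun _ => hw⟩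
  · simpa [hi.le] using hwh i
  · simpa [hi] using hgw i
  · simpa [not_le.mpr hi] using hwh i

lemma exists_complementarySlack_zero (hsum : ∑ i ∈ univ.filter (0 < u ·), b i ≤ dj) :
    ∃ w, IsBundle b dj w ∧ ComplementarySlack b dj u 0 w := by
  refine ⟨fun i => if 0 < u i then b i else 0,
    ⟨fun i => by dsimp only; split_ifs <;> simp, by rwa [← sum_filter]⟩,
    fun i hi => if_pos hi, fun i hi => if_neg (not_lt.mpr hi.le), fun h => absurd h (lt_irrefl 0)⟩

variable [DecidableEq Ω] {S' S'' Z : Finset Ω}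

lemma complementarySlack_iff_of_pos {m : ℕ} (ht : 0 < t) (hS' : ∀ i, i ∈ S' ↔ t < u i)
    (hS'' : ∀ i, i ∈ S'' ↔ u i = t) (hm : ∑ i ∈ S', b i + m = dj) (hz : IsBundle b dj z) :
    ComplementarySlack b dj u t z ↔
      (∀ i ∈ S', z i = b i) ∧ ∑ i ∈ S'', z i = m ∧ ∀ i, i ∉ S' ∪ S'' ∪ Z → z i = 0 := by
  have hbelow : ∀ i, i ∉ S' ∪ S'' ↔ u i < t := fun i => by
    simp only [mem_union, hS', hS'', not_or, not_lt]
    exact ⟨fun h => lt_of_le_of_ne h.1 h.2, fun h => ⟨h.le, h.ne⟩⟩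
  have hdisj : Disjoint S' S'' :=
    disjoint_left.mpr fun i h' h'' => ((hS' i).mp h').ne' ((hS'' i).mp h'')
  have hsplit : ∑ i, z i = ∑ i ∈ S', z i + ∑ i ∈ S'', z i + ∑ i ∈ (S' ∪ S'')ᶜ, z i := by
    rw [← sum_union hdisj, sum_add_sum_compl]
  have hfull : (∀ i ∈ S', z i = b i) → ∑ i ∈ S', z i = ∑ i ∈ S', b i := sum_congr rfl
  constructor
  · rintro ⟨hb, hzero, hsum⟩
    have hout : ∑ i ∈ (S' ∪ S'')ᶜ, z i = 0 :=
      sum_eq_zero fun i hi => hzero i ((hbelow i).mp (mem_compl.mp hi))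
    have hS'b := hfull fun i hi => hb i ((hS' i).mp hi)
    have := hsum ht
    refine ⟨fun i hi => hb i ((hS' i).mp hi), by omega, fun i hi => hzero i ((hbelow i).mp ?_)⟩
    exact fun h => hi (mem_union_left Z h)
  · rintro ⟨hb, hm'', -⟩
    have hout : ∑ i ∈ (S' ∪ S'')ᶜ, z i = 0 := by
      have := hfull hb
      have := hz.2
      omega
    refine ⟨fun i hi => hb i ((hS' i).mpr hi), fun i hi => ?_, fun _ => ?_⟩
    · exact sum_eq_zero_iff.mp hout i (mem_compl.mpr ((hbelow i).mpr hi))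
    · have := hfull hb
      omega

lemma complementarySlack_zero_iff (hpos : ∀ i, i ∈ S' ∪ S'' ↔ 0 < u i)
    (hZ : ∀ i, i ∈ Z ↔ u i = 0) (hzb : ∀ i, z i ≤ b i) :
    ComplementarySlack b dj u 0 z ↔
      (∀ i ∈ S', z i = b i) ∧ ∑ i ∈ S'', z i = ∑ i ∈ S'', b i ∧
        ∀ i, i ∉ S' ∪ S'' ∪ Z → z i = 0 := by
  have hneg : ∀ i, i ∉ S' ∪ S'' ∪ Z ↔ u i < 0 := fun i => by
    rw [mem_union, hpos, hZ, not_or, not_lt, lt_iff_le_and_ne]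
  simp only [hneg]
  simp only [ComplementarySlack, lt_irrefl, false_imp_iff, and_true, ← hpos,
    sum_eq_sum_iff_of_le fun i _ => hzb i, mem_union, or_imp, forall_and, and_assoc]

end Duality

section Tiers

variable {Ω : Type*} [Fintype Ω] {b : Ω → ℕ} {dj : ℕ} {u : Ω → ℝ}

lemma mem_posPayoffs {t : ℝ} : t ∈ posPayoffs u ↔ (∃ i, u i = t) ∧ 0 < t := by
  simp [posPayoffs, and_comm]

noncomputable def coveringPayoffs (b : Ω → ℕ) (dj : ℕ) (u : Ω → ℝ) : Finset ℝ :=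
  (posPayoffs u).filter (fun t => dj ≤ ∑ i ∈ univ.filter (fun i => t ≤ u i), b i)

lemma theta_eq_max' (hQ : (coveringPayoffs b dj u).Nonempty) :
    theta b dj u = (coveringPayoffs b dj u).max' hQ :=
  dif_pos hQ

lemma theta_eq_min' (hQ : ¬ (coveringPayoffs b dj u).Nonempty) (hP : (posPayoffs u).Nonempty) :
    theta b dj u = (posPayoffs u).min' hP :=
  (dif_neg hQ).trans (dif_pos hP)

lemma theta_pos (hP : (posPayoffs u).Nonempty) : 0 < theta b dj u := by
  by_cases hQ : (coveringPayoffs b dj u).Nonempty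
  · rw [theta_eq_max' hQ]
    exact (mem_posPayoffs.mp (mem_filter.mp (max'_mem _ hQ)).1).2
  · rw [theta_eq_min' hQ hP]
    exact (mem_posPayoffs.mp (min'_mem _ hP)).2

lemma le_theta {t : ℝ} (ht : t ∈ coveringPayoffs b dj u) : t ≤ theta b dj u := by
  rw [theta_eq_max' ⟨t, ht⟩]
  exact le_max' _ _ ht

lemma theta_le_of_pos (hcov : ¬ dj ≤ ∑ i ∈ univ.filter (theta b dj u ≤ u ·), b i) {i : Ω}
    (hi : 0 < u i) : theta b dj u ≤ u i := by
  have hQ : ¬ (coveringPayoffs b dj u).Nonempty := fun hQ => hcov <| by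
    have h := max'_mem _ hQ
    rw [← theta_eq_max' hQ] at h
    exact (mem_filter.mp h).2
  have hmem : u i ∈ posPayoffs u := mem_posPayoffs.mpr ⟨⟨i, rfl⟩, hi⟩
  rw [theta_eq_min' hQ ⟨_, hmem⟩]
  exact min'_le _ _ hmem

/-- Otherwise the least payoff above `theta` would be a larger covering level. -/
lemma sum_filter_theta_lt_lt (hd : dj ≠ 0) (hP : (posPayoffs u).Nonempty) :
    ∑ i ∈ univ.filter (theta b dj u < u ·), b i < dj := by
  by_contra! h
  have hne : ∑ i ∈ univ.filter (theta b dj u < u ·), b i ≠ 0 := by omega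
  obtain ⟨k, hk, hmin⟩ := exists_min_image _ u (nonempty_of_sum_ne_zero hne)
  have hk : theta b dj u < u k := (mem_filter.mp hk).2
  have hcover : u k ∈ coveringPayoffs b dj u := by
    refine mem_filter.mpr ⟨mem_posPayoffs.mpr ⟨⟨k, rfl⟩, (theta_pos hP).trans hk⟩,
      h.trans (sum_le_sum_of_subset fun i hi => ?_)⟩
    simpa using hmin i hi
  exact (le_theta hcover).not_gt hk

lemma sum_filter_le_eq_add (b : Ω → ℕ) (u : Ω → ℝ) (t : ℝ) :
    ∑ i ∈ univ.filter (t ≤ u ·), b i =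
      ∑ i ∈ univ.filter (t < u ·), b i + ∑ i ∈ univ.filter (u · = t), b i := by
  classical
  rw [← sum_union (disjoint_filter.mpr fun i _ h h' => h.ne' h')]
  congr 1
  ext i
  simp [le_iff_lt_or_eq, eq_comm]

lemma OmegaP_eq_filter (hd : dj ≠ 0) (hP : (posPayoffs u).Nonempty) :
    OmegaP b dj u = univ.filter (theta b dj u < u ·) :=
  if_neg (by simp [hd, hP.ne_empty])

lemma OmegaPP_eq_filter (hd : dj ≠ 0) (hP : (posPayoffs u).Nonempty) :
    OmegaPP b dj u = univ.filter (u · = theta b dj u) :=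
  if_neg (by simp [hd, hP.ne_empty])

variable [DecidableEq Ω]

def FillsTiers (b : Ω → ℕ) (dj : ℕ) (u : Ω → ℝ) (z : Ω → ℕ) : Prop :=
  (∀ i ∈ OmegaP b dj u, z i = b i) ∧ ∑ i ∈ OmegaPP b dj u, z i = dPPr b dj u ∧
    ∀ i, i ∉ OmegaP b dj u ∪ OmegaPP b dj u ∪ OmegaPPP u → z i = 0

def IsTierMultiplier (b : Ω → ℕ) (dj : ℕ) (u : Ω → ℝ) (t : ℝ) : Prop :=
  0 ≤ t ∧ (∃ w, IsBundle b dj w ∧ ComplementarySlack b dj u t w) ∧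
    ∀ z, IsBundle b dj z → (ComplementarySlack b dj u t z ↔ FillsTiers b dj u z)

/-- With no demand every bundle is empty; any multiplier above all payoffs will do. -/
lemma isTierMultiplier_of_demand_eq_zero : IsTierMultiplier b 0 u (∑ i, max (u i) 0) := by
  have hbig : ∀ i, u i ≤ ∑ i, max (u i) 0 := fun i =>
    (le_max_left _ _).trans (single_le_sum (fun i _ => le_max_right (u i) 0) (mem_univ i))
  have hslack : ComplementarySlack b 0 u (∑ i, max (u i) 0) 0 :=
    ⟨fun i hi => absurd hi (hbig i).not_gt, fun _ _ => rfl, fun _ => by simp⟩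
  refine ⟨sum_nonneg fun i _ => le_max_right _ _,
    ⟨0, ⟨fun _ => Nat.zero_le _, by simp⟩, hslack⟩, fun z hz => ?_⟩
  obtain rfl := hz.eq_zero
  simp [hslack, FillsTiers, OmegaP, OmegaPP, dPPr]

lemma isTierMultiplier_zero (hpos : ∀ i, i ∈ OmegaP b dj u ∪ OmegaPP b dj u ↔ 0 < u i)
    (hm : dPPr b dj u = ∑ i ∈ OmegaPP b dj u, b i)
    (hsum : ∑ i ∈ univ.filter (0 < u ·), b i ≤ dj) : IsTierMultiplier b dj u 0 := by
  refine ⟨le_rfl, exists_complementarySlack_zero hsum, fun z hz => ?_⟩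
  rw [FillsTiers, hm]
  exact complementarySlack_zero_iff hpos (fun i => by simp [OmegaPPP]) hz.1

lemma isTierMultiplier_zero_of_posPayoffs_eq_empty (hP : posPayoffs u = ∅) :
    IsTierMultiplier b dj u 0 := by
  have hnonpos : ∀ i, ¬ 0 < u i := fun i hi => by
    simpa [hP] using mem_posPayoffs.mpr ⟨⟨i, rfl⟩, hi⟩
  have hP' : OmegaP b dj u = ∅ := if_pos (Or.inr hP)
  have hPP' : OmegaPP b dj u = ∅ := if_pos (Or.inr hP)
  apply isTierMultiplier_zero
  · simp [hP', hPP', hnonpos]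
  · simp [dPPr, hPP']
  · simp [hnonpos]

lemma isTierMultiplier_zero_of_not_covers (hd : dj ≠ 0) (hP : (posPayoffs u).Nonempty)
    (hcov : ¬ dj ≤ ∑ i ∈ univ.filter (theta b dj u ≤ u ·), b i) :
    IsTierMultiplier b dj u 0 := by
  have hpos : ∀ i, theta b dj u ≤ u i ↔ 0 < u i :=
    fun i => ⟨(theta_pos hP).trans_le, theta_le_of_pos hcov⟩
  have hsplit := sum_filter_le_eq_add b u (theta b dj u)
  apply isTierMultiplier_zero
  · intro i
    simp [OmegaP_eq_filter hd hP, OmegaPP_eq_filter hd hP, ← hpos i, le_iff_lt_or_eq, eq_comm]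
  · rw [dPPr, dPr, OmegaP_eq_filter hd hP, OmegaPP_eq_filter hd hP]
    omega
  · simp only [← hpos]
    omega

lemma isTierMultiplier_theta (hd : dj ≠ 0) (hP : (posPayoffs u).Nonempty)
    (hcov : dj ≤ ∑ i ∈ univ.filter (theta b dj u ≤ u ·), b i) :
    IsTierMultiplier b dj u (theta b dj u) := by
  have hlow := sum_filter_theta_lt_lt (b := b) hd hP
  have hsplit := sum_filter_le_eq_add b u (theta b dj u)
  refine ⟨(theta_pos hP).le, exists_complementarySlack_of_le_of_le hlow.le hcov,
    fun z hz => complementarySlack_iff_of_pos (theta_pos hP) ?_ ?_ ?_ hz⟩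
  · simp [OmegaP_eq_filter hd hP]
  · simp [OmegaPP_eq_filter hd hP]
  · rw [dPPr, dPr, OmegaP_eq_filter hd hP, OmegaPP_eq_filter hd hP]
    omega

lemma exists_isTierMultiplier (b : Ω → ℕ) (dj : ℕ) (u : Ω → ℝ) :
    ∃ t, IsTierMultiplier b dj u t := by
  rcases eq_or_ne dj 0 with rfl | hd
  · exact ⟨_, isTierMultiplier_of_demand_eq_zero⟩
  rcases (posPayoffs u).eq_empty_or_nonempty with hP | hP
  · exact ⟨0, isTierMultiplier_zero_of_posPayoffs_eq_empty hP⟩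
  by_cases hcov : dj ≤ ∑ i ∈ univ.filter (theta b dj u ≤ u ·), b i
  · exact ⟨_, isTierMultiplier_theta hd hP hcov⟩
  · exact ⟨0, isTierMultiplier_zero_of_not_covers hd hP hcov⟩

end Tiers

theorem preferred_bundle_structure_general
    {Ω N : Type*} [Fintype Ω] [DecidableEq Ω]
    (b : Ω → ℕ) (d : N → ℕ) (v : Ω → N → ℕ)
    (p : Ω → ℝ)
    (j : N) (y : Ω → ℕ) (hy : IsBundle b (d j) y) :
    InDemand b (d j) (fun i => v i j) p y ↔
      ((∀ i ∈ OmegaP b (d j) (payoff v p j), y i = b i) ∧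
        (∑ i ∈ OmegaPP b (d j) (payoff v p j), y i = dPPr b (d j) (payoff v p j)) ∧
        (∀ i, i ∉ OmegaP b (d j) (payoff v p j) ∪ OmegaPP b (d j) (payoff v p j) ∪
            OmegaPPP (payoff v p j) → y i = 0)) := by
  obtain ⟨t, ht, ⟨w, hw, hwt⟩, htiers⟩ := exists_isTierMultiplier b (d j) (payoff v p j)
  exact (inDemand_iff_complementarySlack ht hw hwt hy).trans (htiers y hy)

/-- structure of preferred bundles for truncated additive valuations. -/
theorem preferred_bundle_structure
    {Ω N : Type*} [Fintype Ω] [DecidableEq Ω]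
    (b : Ω → ℕ) (d : N → ℕ) (v : Ω → N → ℕ)
    (p : Ω → ℝ) (hp : ∀ i, 0 ≤ p i)
    (j : N) (y : Ω → ℕ) (hy : IsBundle b (d j) y) :
    InDemand b (d j) (fun i => v i j) p y ↔
      ((∀ i ∈ OmegaP b (d j) (payoff v p j), y i = b i) ∧
        (∑ i ∈ OmegaPP b (d j) (payoff v p j), y i = dPPr b (d j) (payoff v p j)) ∧
        (∀ i, i ∉ OmegaP b (d j) (payoff v p j) ∪ OmegaPP b (d j) (payoff v p j) ∪
            OmegaPPP (payoff v p j) → y i = 0)) :=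
  preferred_bundle_structure_general b d v p j y hy
end
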